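/- arXiv:1309.7457 — 2 statements merged into one kernel-verified Lean document; each statement's English description precedes it below -/
import Mathlib

section
/- Let f : ℕ → ℕ be nondecreasing with n ≤ f(n) for all n, and suppose f is superpolynomial, i.e. for every k ∈ ℕ the real sequence f(n)/n^k tends to infinity as n → ∞. Then f is not subhomogeneous. -/
/-
If f(2n) ≤ C·f(n) for all n ≥ 1, then iterating gives f(2^m) ≤ C^m·f(1) ≤ (2^m)^C·f(1), using C ≤ 2^C.
So along n = 2^m the ratio f(n)/n^C stays bounded by f(1), and f cannot be superpolynomial.
-/

open Filter

def Subhomogeneous (f : ℕ → ℕ) : Prop :=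
  ∀ c : ℕ, 1 ≤ c → ∃ cbar : ℕ, 1 ≤ cbar ∧ ∀ n : ℕ, 1 ≤ n → f (c * n) ≤ cbar * f n

theorem le_pow_mul_of_le_mul {f : ℕ → ℕ} {c C : ℕ} (hc : 1 ≤ c)
    (h : ∀ n, 1 ≤ n → f (c * n) ≤ C * f n) (m : ℕ) : f (c ^ m) ≤ C ^ m * f 1 := by
  induction m with
  | zero => simp
  | succ m ih =>
    calc f (c ^ (m + 1)) = f (c * c ^ m) := by rw [pow_succ']
      _ ≤ C * f (c ^ m) := h _ (Nat.one_le_pow _ _ hc)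
      _ ≤ C * (C ^ m * f 1) := Nat.mul_le_mul_left _ ih
      _ = C ^ (m + 1) * f 1 := by ring

theorem Subhomogeneous.exists_le_pow_two_pow_mul {f : ℕ → ℕ} (hf : Subhomogeneous f) :
    ∃ k : ℕ, ∀ m : ℕ, f (2 ^ m) ≤ (2 ^ m) ^ k * f 1 := by
  obtain ⟨C, -, hC⟩ := hf 2 one_le_two
  refine ⟨C, fun m => (le_pow_mul_of_le_mul one_le_two hC m).trans (Nat.mul_le_mul_right _ ?_)⟩
  calc C ^ m ≤ (2 ^ C) ^ m := Nat.pow_le_pow_left Nat.lt_two_pow_self.le m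
    _ = (2 ^ m) ^ C := by rw [← pow_mul, ← pow_mul, Nat.mul_comm]

theorem stmt_1_general (f : ℕ → ℕ)
    (hsuper : ∀ k : ℕ, Tendsto (fun n : ℕ => (f n : ℝ) / (n : ℝ) ^ k) atTop atTop) :
    ¬ Subhomogeneous f := by
  intro hsub
  obtain ⟨k, hk⟩ := hsub.exists_le_pow_two_pow_mul
  have htend : Tendsto (fun m : ℕ => (f (2 ^ m) : ℝ) / ((2 ^ m : ℕ) : ℝ) ^ k) atTop atTop :=
    (hsuper k).comp (tendsto_pow_atTop_atTop_of_one_lt one_lt_two)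
  refine not_bddAbove_of_tendsto_atTop htend ⟨f 1, Set.forall_mem_range.2 fun m => ?_⟩
  rw [div_le_iff₀ (by positivity)]
  exact_mod_cast (hk m).trans_eq (Nat.mul_comm _ _)

theorem stmt_1 (f : ℕ → ℕ) (hmono : Monotone f) (hge : ∀ n, n ≤ f n)
    (hsuper : ∀ k : ℕ, Tendsto (fun n : ℕ => (f n : ℝ) / (n : ℝ) ^ k) atTop atTop) :
    ¬ Subhomogeneous f :=
  stmt_1_general f hsuper
end

section
/- There exist nondecreasing functions f₁, f₂ : ℕ → ℕ such that f₁ ∈ o(f₂) but the shifted function n ↦ f₁(n+1) is not in o(f₂). (Thus from f₁(n) ∈ o(f₂(n)) it does not in general follow that f₁(n+1) ∈ o(f₂(n)), even for monotone f₁.) -/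
/-!
Take `f₁ n = (n - 1)!` and `f₂ n = n!`. Since `(n - 1)! = n! / n` for `n ≥ 1`, `f₁ ∈ o(f₂)`,
whereas the shift `f₁ (n + 1) = n!` is `f₂` itself, which is not `o` of itself.
-/

open Filter Asymptotics Nat

lemma isLittleO_factorial_pred_factorial :
    (fun n : ℕ => ((n - 1)! : ℝ)) =o[atTop] (fun n : ℕ => (n ! : ℝ)) := by
  have hinv : (fun n : ℕ => (n : ℝ)⁻¹) =o[atTop] (fun _ => (1 : ℝ)) :=
    (isLittleO_one_iff ℝ).mpr tendsto_inv_atTop_nhds_zero_nat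
  refine (hinv.mul_isBigO (isBigO_refl (fun n : ℕ => (n ! : ℝ)) atTop)).congr' ?_ (by simp)
  filter_upwards [eventually_ne_atTop 0] with n hn
  rw [← mul_factorial_pred hn, cast_mul, inv_mul_cancel_left₀ (cast_ne_zero.mpr hn)]

theorem stmt_18 :
    ∃ f₁ f₂ : ℕ → ℕ, Monotone f₁ ∧ Monotone f₂ ∧
      (fun n : ℕ => (f₁ n : ℝ)) =o[atTop] (fun n : ℕ => (f₂ n : ℝ)) ∧
      ¬ ((fun n : ℕ => (f₁ (n + 1) : ℝ)) =o[atTop] (fun n : ℕ => (f₂ n : ℝ))) :=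
  ⟨fun n => (n - 1)!, factorial, monotone_factorial.comp fun _ _ h => Nat.sub_le_sub_right h 1,
    monotone_factorial, isLittleO_factorial_pred_factorial,
    isLittleO_irrefl (.of_forall fun n => cast_ne_zero.mpr n.factorial_ne_zero)⟩
end
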